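/- arXiv:1507.00144 — 2 statements merged into one kernel-verified Lean document; each statement's English description precedes it below -/
import Mathlib

section
/- For |t| > πℏ, |sinc(t/(2ℏ))| ≥ (2/(π|t|)) · dist(t, Z₀), where Z₀ = {2πkℏ : k ∈ ℤ, k ≠ 0}. -/
open Real Metric

noncomputable def sinc (t : ℝ) : ℝ := if t = 0 then 1 else Real.sin t / t

/-
Put `s = t / (2ℏ)` and let `k` be the integer nearest to `s / π`, so `|s - kπ| ≤ π / 2`, and
`k ≠ 0` because `|s| > π / 2`. Jordan's inequality on the reduced angle gives
`|sin s| = |sin (s - kπ)| ≥ (2 / π) |s - kπ|`, while `2πkℏ ∈ Z₀` lies at distance `2ℏ |s - kπ|`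
from `t`.
-/

lemma abs_sin_sub_int_mul_pi (x : ℝ) (k : ℤ) : |sin (x - k * π)| = |sin x| := by
  rw [sin_sub_int_mul_pi, abs_mul, abs_neg_one_zpow, one_mul]

lemma abs_sub_round_div_pi_mul_pi_le (x : ℝ) : |x - round (x / π) * π| ≤ π / 2 := by
  calc |x - round (x / π) * π| = |x / π - round (x / π)| * π := by
        rw [← abs_of_pos pi_pos, ← abs_mul, abs_of_pos pi_pos, sub_mul, div_mul_cancel₀ _ pi_ne_zero]
    _ ≤ 1 / 2 * π := by gcongr; exact abs_sub_round _
    _ = π / 2 := by ring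

lemma two_div_pi_mul_abs_sub_round_le_abs_sin (x : ℝ) :
    2 / π * |x - round (x / π) * π| ≤ |sin x| := by
  simpa only [abs_sin_sub_int_mul_pi] using mul_abs_le_abs_sin (abs_sub_round_div_pi_mul_pi_le x)

lemma round_div_pi_ne_zero {x : ℝ} (hx : π / 2 < |x|) : round (x / π) ≠ 0 := by
  intro h
  have := abs_sub_round_div_pi_mul_pi_le x
  rw [h, Int.cast_zero, zero_mul, sub_zero] at this
  linarith

lemma abs_sinc_of_ne_zero {x : ℝ} (hx : x ≠ 0) : |_root_.sinc x| = |sin x| / |x| := by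
  rw [_root_.sinc, if_neg hx, abs_div]

theorem sinc_bound_large (ℏ : ℝ) (hℏ : 0 < ℏ) (t : ℝ) (ht : |t| > π * ℏ) :
    |_root_.sinc (t / (2 * ℏ))| ≥
      (2 / (π * |t|)) * Metric.infDist t {s : ℝ | ∃ k : ℤ, k ≠ 0 ∧ s = 2 * π * (k : ℝ) * ℏ} := by
  set Z₀ : Set ℝ := {s : ℝ | ∃ k : ℤ, k ≠ 0 ∧ s = 2 * π * (k : ℝ) * ℏ}
  set s := t / (2 * ℏ)
  have hts : t = 2 * ℏ * s := by simp only [s]; field_simp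
  have habs : |t| = 2 * ℏ * |s| := by rw [hts, abs_mul, abs_of_pos (by positivity)]
  have hs : π / 2 < |s| := by nlinarith
  set k := round (s / π)
  have hdist : infDist t Z₀ ≤ 2 * ℏ * |s - k * π| := by
    have hk : 2 * π * k * ℏ ∈ Z₀ := ⟨k, round_div_pi_ne_zero hs, rfl⟩
    refine (infDist_le_dist_of_mem hk).trans_eq ?_
    rw [dist_eq, hts, show 2 * ℏ * s - 2 * π * k * ℏ = 2 * ℏ * (s - k * π) by ring, abs_mul,
      abs_of_pos (by positivity)]
  calc 2 / (π * |t|) * infDist t Z₀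
      ≤ 2 / (π * |t|) * (2 * ℏ * |s - k * π|) := by gcongr
    _ = 2 * ℏ / |t| * (2 / π * |s - k * π|) := by ring
    _ ≤ 2 * ℏ / |t| * |sin s| := by gcongr; exact two_div_pi_mul_abs_sub_round_le_abs_sin s
    _ = |_root_.sinc s| := by
      rw [abs_sinc_of_ne_zero (abs_pos.mp (pi_div_two_pos.trans hs)), habs]
      field_simp
end

section
/- For r ≥ 2 and s ≥ 2, Op_W(x^r p^s) ≠ Op_BJ(x^r p^s): the coefficient of x̂^{r−ℓ}p̂^{s−ℓ} in the normally ordered expansions, (−iℏ)^ℓ C(s,ℓ)C(r,ℓ)ℓ!/2^ℓ versus (−iℏ)^ℓ C(s,ℓ)C(r,ℓ)ℓ!/(ℓ+1), differ for ℓ = 2 since 1/4 ≠ 1/3. -/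
/-- Multiplication operator `x̂`. -/
def Xop : (ℝ → ℂ) → (ℝ → ℂ) := fun ψ x => x * ψ x

/-- Momentum operator `p̂ = −iℏ d/dx`. -/
noncomputable def Pop (ℏ : ℝ) : (ℝ → ℂ) → (ℝ → ℂ) := fun ψ x => -Complex.I * ℏ * deriv ψ x

lemma Xop_iter (j : ℕ) (f : ℝ → ℂ) (x : ℝ) : Xop^[j] f x = (x:ℂ)^j * f x := by
  induction j generalizing f with
  | zero => simp
  | succ n ih =>
      rw [Function.iterate_succ_apply', Xop]
      rw [ih]
      ring

lemma deriv_mul_pow (c : ℂ) (n : ℕ) (x : ℝ) :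
    deriv (fun y : ℝ => c * (y:ℂ)^n) x = c * n * (x:ℂ)^(n-1) := by
  have h := ((hasDerivAt_pow n ((x:ℝ):ℂ)).comp_ofReal).const_mul c
  rw [h.deriv]
  ring

lemma Pop_iter (ℏ : ℝ) (m k : ℕ) :
    (Pop ℏ)^[k] (fun x : ℝ => (x:ℂ)^m)
      = fun x : ℝ => (-Complex.I*ℏ)^k * ((m.descFactorial k : ℕ) : ℂ) * (x:ℂ)^(m-k) := by
  induction k with
  | zero => simp
  | succ n ih =>
      rw [Function.iterate_succ_apply', ih]
      funext x
      simp only [Pop]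
      rw [show (fun x : ℝ => (-Complex.I*ℏ)^n * ((m.descFactorial n : ℕ) : ℂ) * (x:ℂ)^(m-n))
            = fun x : ℝ => ((-Complex.I*ℏ)^n * ((m.descFactorial n : ℕ) : ℂ)) * (x:ℂ)^(m-n) from rfl]
      rw [deriv_mul_pow]
      rw [Nat.descFactorial_succ]
      push_cast
      rw [show m - (n+1) = m - n - 1 from rfl]
      ring

lemma sum_eval (ℏ : ℝ) (r s : ℕ) (_hs : 2 ≤ s) (w : ℕ → ℂ) (wr : ℕ → ℝ)
    (hw : ∀ ℓ, w ℓ = (wr ℓ : ℂ)) :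
    (∑ ℓ ∈ Finset.range (min r s + 1),
        (-Complex.I * ℏ)^ℓ * (s.choose ℓ : ℂ) * (r.choose ℓ : ℂ) * w ℓ
          * Xop^[r - ℓ] ((Pop ℏ)^[s - ℓ] (fun x : ℝ => (x:ℂ)^(s-2))) 1)
      = (-Complex.I * ℏ)^s
        * ((∑ ℓ ∈ Finset.range (min r s + 1),
            ((s.choose ℓ : ℝ) * (r.choose ℓ : ℝ) * ((s-2).descFactorial (s-ℓ) : ℝ)) * wr ℓ : ℝ) : ℂ) := by
  rw [Complex.ofReal_sum, Finset.mul_sum]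
  apply Finset.sum_congr rfl
  intro ℓ hℓ
  have hℓs : ℓ ≤ s := le_trans (Nat.lt_succ_iff.mp (Finset.mem_range.mp hℓ)) (min_le_right r s)
  rw [Pop_iter, Xop_iter, hw]
  have hpow : (-Complex.I*(ℏ:ℂ))^ℓ * (-Complex.I*(ℏ:ℂ))^(s-ℓ) = (-Complex.I*(ℏ:ℂ))^s := by
    rw [← pow_add, Nat.add_sub_cancel' hℓs]
  push_cast
  simp only [one_pow]
  linear_combination ((s.choose ℓ : ℂ) * (r.choose ℓ : ℂ)
    * ((s-2).descFactorial (s-ℓ) : ℂ) * (wr ℓ : ℂ)) * hpow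

/-- For `r, s ≥ 2`, Weyl and Born-Jordan quantizations of `x^r p^s` are different operators. -/
theorem weyl_ne_bj (ℏ : ℝ) (hℏ : 0 < ℏ) (r s : ℕ) (hr : 2 ≤ r) (hs : 2 ≤ s) :
    ¬ (∀ (ψ : ℝ → ℂ), ContDiff ℝ (⊤ : ℕ∞) ψ → ∀ x : ℝ,
      (∑ ℓ ∈ Finset.range (min r s + 1),
        (-Complex.I * ℏ)^ℓ * (s.choose ℓ : ℂ) * (r.choose ℓ : ℂ)
          * ((ℓ.factorial : ℂ) / 2^ℓ) * Xop^[r - ℓ] ((Pop ℏ)^[s - ℓ] ψ) x)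
      = ∑ ℓ ∈ Finset.range (min r s + 1),
        (-Complex.I * ℏ)^ℓ * (s.choose ℓ : ℂ) * (r.choose ℓ : ℂ)
          * ((ℓ.factorial : ℂ) / (ℓ + 1)) * Xop^[r - ℓ] ((Pop ℏ)^[s - ℓ] ψ) x) := by
  intro h
  have hsmooth : ContDiff ℝ (⊤ : ℕ∞) (fun x : ℝ => (x:ℂ)^(s-2)) :=
    Complex.ofRealCLM.contDiff.pow (s-2)
  have key := h (fun x => (x:ℂ)^(s-2)) hsmooth 1
  rw [sum_eval ℏ r s hs (fun ℓ => (ℓ.factorial : ℂ) / 2^ℓ)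
        (fun ℓ => (ℓ.factorial : ℝ) / 2^ℓ) (by intro ℓ; push_cast; ring),
      sum_eval ℏ r s hs (fun ℓ => (ℓ.factorial : ℂ) / (ℓ + 1))
        (fun ℓ => (ℓ.factorial : ℝ) / (ℓ + 1)) (by intro ℓ; push_cast; ring)] at key
  have hIh : (-Complex.I * (ℏ:ℂ)) ≠ 0 :=
    mul_ne_zero (neg_ne_zero.mpr Complex.I_ne_zero) (by exact_mod_cast hℏ.ne')
  have hAB : (∑ ℓ ∈ Finset.range (min r s + 1),
      ((s.choose ℓ : ℝ) * (r.choose ℓ : ℝ) * ((s-2).descFactorial (s-ℓ) : ℝ))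
        * ((ℓ.factorial : ℝ) / 2^ℓ))
      = ∑ ℓ ∈ Finset.range (min r s + 1),
      ((s.choose ℓ : ℝ) * (r.choose ℓ : ℝ) * ((s-2).descFactorial (s-ℓ) : ℝ))
        * ((ℓ.factorial : ℝ) / (ℓ + 1)) := by
    have := mul_left_cancel₀ (pow_ne_zero s hIh) key
    exact_mod_cast this
  have hlt : (∑ ℓ ∈ Finset.range (min r s + 1),
      ((s.choose ℓ : ℝ) * (r.choose ℓ : ℝ) * ((s-2).descFactorial (s-ℓ) : ℝ))
        * ((ℓ.factorial : ℝ) / 2^ℓ))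
      < ∑ ℓ ∈ Finset.range (min r s + 1),
      ((s.choose ℓ : ℝ) * (r.choose ℓ : ℝ) * ((s-2).descFactorial (s-ℓ) : ℝ))
        * ((ℓ.factorial : ℝ) / (ℓ + 1)) := by
    apply Finset.sum_lt_sum
    · intro ℓ _
      apply mul_le_mul_of_nonneg_left _ (by positivity)
      apply div_le_div_of_nonneg_left (by positivity) (by positivity)
      have hp : (ℓ + 1 : ℕ) ≤ 2 ^ ℓ := Nat.lt_two_pow_self (n := ℓ)
      exact_mod_cast hp
    · refine ⟨2, ?_, ?_⟩
      · simp [Nat.lt_succ_iff, le_min hr hs]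
      · apply mul_lt_mul_of_pos_left
        · norm_num
        · have h1 : 0 < (s.choose 2 : ℝ) := by exact_mod_cast Nat.choose_pos hs
          have h2 : 0 < (r.choose 2 : ℝ) := by exact_mod_cast Nat.choose_pos hr
          have h3 : 0 < ((s-2).descFactorial (s-2) : ℝ) := by
            rw [Nat.descFactorial_self]
            exact_mod_cast (s-2).factorial_pos
          positivity
  exact absurd hAB hlt.ne
end
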